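/- arXiv:1908.00697 — 2 statements merged into one kernel-verified Lean document; each statement's English description precedes it below -/
import Mathlib

section
/- Let X and U be measurable spaces, κ a Markov kernel from X × U to X, π : ℕ → X → U a sequence of measurable maps, K and T measurable subsets of X, N ∈ ℕ, and ε ≥ 0. Let V : ℕ → X → ℝ be the exact backward recursion: V_N = 𝟙_T and, for k < N, V_k(x) = 𝟙_K(x)·∫ V_{k+1}(y) dκ((x, π_k(x)))(y); assume each V_k is measurable. Let V̄ : ℕ → X → ℝ be any family of measurable functions with |V̄_k(x)| ≤ 1 for all k, x, satisfying V̄_N = 𝟙_T and the one-step error bound |V̄_k(x) − 𝟙_K(x)·∫ V̄_{k+1}(y) dκ((x, π_k(x)))(y)| ≤ ε for all k < N and all x. Then for every k ≤ N and every x ∈ X, |V_k(x) − V̄_k(x)| ≤ (N − k)·ε; in particular |V_0(x) − V̄_0(x)| ≤ N·ε. (Corollary 1: the accumulated error of the backward recursion over a horizon of length N is at most Nε.) -/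
open MeasureTheory ProbabilityTheory

/-- Corollary 1: if the approximate value functions `V̄ₖ` satisfy the backward
recursion up to a one-step error of at most `ε`, then the accumulated error over
a horizon of length `N` satisfies `|V_k(x) − V̄_k(x)| ≤ (N − k)·ε` for all `k ≤ N`;
in particular `|V_0(x) − V̄_0(x)| ≤ N·ε`. -/
theorem backward_recursion_accumulated_error
    {X U : Type*} [MeasurableSpace X] [MeasurableSpace U]
    (κ : Kernel (X × U) X) [IsMarkovKernel κ]
    (π : ℕ → X → U) (hπ : ∀ k, Measurable (π k))
    (K T : Set X) (hK : MeasurableSet K) (hT : MeasurableSet T)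
    (N : ℕ) (ε : ℝ) (hε : 0 ≤ ε)
    (V : ℕ → X → ℝ) (hVmeas : ∀ k, Measurable (V k))
    (hVN : ∀ x, V N x = T.indicator (fun _ => (1 : ℝ)) x)
    (hVk : ∀ k < N, ∀ x, V k x =
      K.indicator (fun _ => (1 : ℝ)) x * ∫ y, V (k + 1) y ∂(κ (x, π k x)))
    (Vbar : ℕ → X → ℝ) (hVbarMeas : ∀ k, Measurable (Vbar k))
    (hVbarBdd : ∀ k x, |Vbar k x| ≤ 1)
    (hVbarN : ∀ x, Vbar N x = T.indicator (fun _ => (1 : ℝ)) x)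
    (hVbarStep : ∀ k < N, ∀ x,
      |Vbar k x - K.indicator (fun _ => (1 : ℝ)) x *
        ∫ y, Vbar (k + 1) y ∂(κ (x, π k x))| ≤ ε) :
    (∀ k ≤ N, ∀ x, |V k x - Vbar k x| ≤ (N - k : ℕ) * ε) ∧
      (∀ x, |V 0 x - Vbar 0 x| ≤ (N : ℝ) * ε) := by
  -- V is bounded by 1
  have hVbdd : ∀ d k, k + d = N → ∀ x, |V k x| ≤ 1 := by
    intro d
    induction d with
    | zero =>
      intro k hk x
      simp only [Nat.add_zero] at hk
      subst hk
      rw [hVN x]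
      by_cases hx : x ∈ T <;> simp [Set.indicator, hx]
    | succ d ih =>
      intro k hk x
      have hkN : k < N := by omega
      rw [hVk k hkN x]
      have h1 : |∫ y, V (k + 1) y ∂(κ (x, π k x))| ≤ 1 := by
        have := norm_integral_le_of_norm_le_const (μ := κ (x, π k x))
          (f := fun y => V (k + 1) y) (C := 1)
          (Filter.Eventually.of_forall fun y => by simpa using ih (k + 1) (by omega) y)
        simpa using this
      have h2 : |K.indicator (fun _ => (1 : ℝ)) x| ≤ 1 := by
        by_cases hx : x ∈ K <;> simp [Set.indicator, hx]
      calc |K.indicator (fun _ => (1 : ℝ)) x * ∫ y, V (k + 1) y ∂(κ (x, π k x))|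
          = |K.indicator (fun _ => (1 : ℝ)) x| * |∫ y, V (k + 1) y ∂(κ (x, π k x))| :=
            abs_mul _ _
        _ ≤ 1 * 1 := mul_le_mul h2 h1 (abs_nonneg _) zero_le_one
        _ = 1 := one_mul 1
  have main : ∀ d k, k + d = N → ∀ x, |V k x - Vbar k x| ≤ (d : ℝ) * ε := by
    intro d
    induction d with
    | zero =>
      intro k hk x
      simp only [Nat.add_zero] at hk
      subst hk
      rw [hVN x, hVbarN x]
      simp
    | succ d ih =>
      intro k hk x
      have hkN : k < N := by omega
      set μ := κ (x, π k x)
      have hintV : Integrable (fun y => V (k + 1) y) μ :=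
        ⟨(hVmeas (k + 1)).aestronglyMeasurable,
          HasFiniteIntegral.of_bounded (C := 1)
            (Filter.Eventually.of_forall fun y => by
              simpa using hVbdd d (k + 1) (by omega) y)⟩
      have hintVb : Integrable (fun y => Vbar (k + 1) y) μ :=
        ⟨(hVbarMeas (k + 1)).aestronglyMeasurable,
          HasFiniteIntegral.of_bounded (C := 1)
            (Filter.Eventually.of_forall fun y => by simpa using hVbarBdd (k + 1) y)⟩
      have hdiff : |(∫ y, V (k + 1) y ∂μ) - ∫ y, Vbar (k + 1) y ∂μ| ≤ (d : ℝ) * ε := by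
        rw [← integral_sub hintV hintVb]
        have := norm_integral_le_of_norm_le_const (μ := μ)
          (f := fun y => V (k + 1) y - Vbar (k + 1) y) (C := (d : ℝ) * ε)
          (Filter.Eventually.of_forall fun y => by simpa using ih (k + 1) (by omega) y)
        simpa using this
      have hInd : |K.indicator (fun _ => (1 : ℝ)) x| ≤ 1 := by
        by_cases hx : x ∈ K <;> simp [Set.indicator, hx]
      have h1 : |V k x - K.indicator (fun _ => (1 : ℝ)) x * ∫ y, Vbar (k + 1) y ∂μ|
          ≤ (d : ℝ) * ε := by
        rw [hVk k hkN x, ← mul_sub]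
        calc |K.indicator (fun _ => (1 : ℝ)) x *
              ((∫ y, V (k + 1) y ∂μ) - ∫ y, Vbar (k + 1) y ∂μ)|
            = |K.indicator (fun _ => (1 : ℝ)) x| *
              |(∫ y, V (k + 1) y ∂μ) - ∫ y, Vbar (k + 1) y ∂μ| := abs_mul _ _
          _ ≤ 1 * ((d : ℝ) * ε) :=
              mul_le_mul hInd hdiff (abs_nonneg _) zero_le_one
          _ = (d : ℝ) * ε := one_mul _
      have h2 := hVbarStep k hkN x
      calc |V k x - Vbar k x|
          ≤ |V k x - K.indicator (fun _ => (1 : ℝ)) x * ∫ y, Vbar (k + 1) y ∂μ|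
            + |K.indicator (fun _ => (1 : ℝ)) x * (∫ y, Vbar (k + 1) y ∂μ) - Vbar k x| := by
              have := abs_sub_abs_le_abs_sub (V k x) (Vbar k x)
              exact abs_sub_le _ _ _
        _ ≤ (d : ℝ) * ε + ε := by
              refine add_le_add h1 ?_
              rw [abs_sub_comm]; exact h2
        _ = ((d + 1 : ℕ) : ℝ) * ε := by push_cast; ring
  constructor
  · intro k hk x
    have := main (N - k) k (by omega) x
    simpa using this
  · intro x
    have := main N 0 (by omega) x
    simpa using this
end

section
/- Let X be a measurable space, (κ_k)_{k∈ℕ} a sequence of Markov kernels from X to X, K and T measurable subsets of X, N ≥ 1, and x₀ ∈ X. Let P_{x₀} be the law on the path space X^ℕ of the time-inhomogeneous Markov chain (x_k)_{k∈ℕ} with x_0 = x₀ and x_{k+1} distributed as κ_k(x_k) conditional on x_k (constructed via the Ionescu–Tulcea theorem). Define V : ℕ → X → ℝ by V_N = 𝟙_T and V_k(x) = 𝟙_K(x)·∫ V_{k+1}(y) dκ_k(x)(y) for k < N. Then P_{x₀}{ ω ∈ X^ℕ : ω(N) ∈ T and ω(k) ∈ K for all k with 0 ≤ k ≤ N−1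 } = V_0(x₀). (The backward dynamic-programming recursion computes the terminal-hitting reach-avoid probability r_{x₀}^π(K,T) = Pr{x_N ∈ T ∧ x_k ∈ K, ∀k ∈ [0,N−1]}.) -/
open MeasureTheory ProbabilityTheory Set
open scoped ENNReal

/-! The recursion keeps every `V k` in `[0, 1]`, so `W k := ofReal ∘ V k` satisfies the same
recursion with lintegrals. By the Markov property, integrating `W (j + 1) (ω (j + 1))` over the
paths that stay in `K` up to time `j` gives the integral of `W j (ω j)` over the paths that stay in
`K` before time `j`. Telescoping links `j = N`, where the integral is the reach-avoid probability,
to `j = 0`, where it is `W 0 x₀` because the chain starts at `x₀`. -/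

section Path

variable {X : Type*}

def stayIn (K : Set X) (j : ℕ) : Set (ℕ → X) := {ω | ∀ k < j, ω k ∈ K}

lemma stayIn_zero (K : Set X) : stayIn K 0 = univ := by
  ext; simp [stayIn]

lemma stayIn_succ (K : Set X) (j : ℕ) : stayIn K (j + 1) = {ω | ω j ∈ K} ∩ stayIn K j := by
  ext ω
  simp only [stayIn, mem_ofPred_eq, mem_inter_iff, Nat.lt_succ_iff_lt_or_eq, or_imp, forall_and,
    forall_eq]
  exact and_comm

variable [MeasurableSpace X]

abbrev pastMeasurableSpace (k : ℕ) : MeasurableSpace (ℕ → X) :=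
  ⨆ i : Fin (k + 1), MeasurableSpace.comap (fun ω : ℕ → X => ω i) ‹MeasurableSpace X›

lemma measurableSet_stayIn_past {K : Set X} (hK : MeasurableSet K) (j : ℕ) :
    MeasurableSet[pastMeasurableSpace j] (stayIn K (j + 1)) := by
  have : stayIn K (j + 1) = ⋂ i : Fin (j + 1), (fun ω : ℕ → X => ω i) ⁻¹' K := by
    ext ω; simp [stayIn, Fin.forall_iff]
  rw [this]
  exact MeasurableSet.iInter fun i => le_iSup (fun i : Fin (j + 1) =>
    MeasurableSpace.comap (fun ω : ℕ → X => ω i) ‹MeasurableSpace X›) i _ ⟨K, hK, rfl⟩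

lemma setLIntegral_comp_succ_eq {κ : Kernel X X} {P : Measure (ℕ → X)} {j : ℕ}
    {B : Set (ℕ → X)}
    (hmarkov : ∀ A, MeasurableSet A → P (B ∩ {ω | ω (j + 1) ∈ A}) = ∫⁻ ω in B, κ (ω j) A ∂P)
    {f : X → ℝ≥0∞} (hf : Measurable f) :
    ∫⁻ ω in B, f (ω (j + 1)) ∂P = ∫⁻ ω in B, ∫⁻ y, f y ∂κ (ω j) ∂P := by
  have hlaw : (P.restrict B).map (fun ω => ω (j + 1))
      = ((P.restrict B).map (fun ω => ω j)).bind κ := by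
    ext A hA
    rw [Measure.map_apply (measurable_pi_apply _) hA,
      Measure.restrict_apply (measurable_pi_apply _ hA),
      Measure.bind_apply hA κ.measurable.aemeasurable,
      lintegral_map (κ.measurable_coe hA) (measurable_pi_apply j), inter_comm]
    exact hmarkov A hA
  rw [← lintegral_map hf (measurable_pi_apply _), hlaw,
    Measure.lintegral_bind κ.measurable.aemeasurable hf.aemeasurable,
    lintegral_map hf.lintegral_kernel (measurable_pi_apply j)]

lemma lintegral_comp_zero_of_map_eq_dirac {P : Measure (ℕ → X)} {x₀ : X}
    (hinit : P.map (fun ω => ω 0) = Measure.dirac x₀) {f : X → ℝ≥0∞} (hf : Measurable f) :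
    ∫⁻ ω, f (ω 0) ∂P = f x₀ := by
  rw [← lintegral_map hf (measurable_pi_apply 0), hinit, lintegral_dirac' _ hf]

variable {κ : ℕ → Kernel X X} {P : Measure (ℕ → X)} {K : Set X} {W : ℕ → X → ℝ≥0∞}

lemma setLIntegral_stayIn_succ (hK : MeasurableSet K) {j : ℕ}
    (hmarkov : ∀ A, MeasurableSet A → ∀ B, MeasurableSet[pastMeasurableSpace j] B →
      P (B ∩ {ω | ω (j + 1) ∈ A}) = ∫⁻ ω in B, κ j (ω j) A ∂P)
    (hW : Measurable (W (j + 1)))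
    (hrec : ∀ x, W j x = K.indicator (fun x => ∫⁻ y, W (j + 1) y ∂κ j x) x) :
    ∫⁻ ω in stayIn K (j + 1), W (j + 1) (ω (j + 1)) ∂P = ∫⁻ ω in stayIn K j, W j (ω j) ∂P := by
  rw [setLIntegral_comp_succ_eq (fun A hA => hmarkov A hA _ (measurableSet_stayIn_past hK j)) hW,
    stayIn_succ]
  simp_rw [hrec, ← indicator_comp_right (fun ω : ℕ → X => ω j)]
  rw [setLIntegral_indicator (measurable_pi_apply j hK)]
  rfl

lemma setLIntegral_stayIn_eq_lintegral_zero (hK : MeasurableSet K) {N : ℕ}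
    (hmarkov : ∀ k : ℕ, ∀ A, MeasurableSet A → ∀ B, MeasurableSet[pastMeasurableSpace k] B →
      P (B ∩ {ω | ω (k + 1) ∈ A}) = ∫⁻ ω in B, κ k (ω k) A ∂P)
    (hW : ∀ k, Measurable (W k))
    (hrec : ∀ k < N, ∀ x, W k x = K.indicator (fun x => ∫⁻ y, W (k + 1) y ∂κ k x) x) :
    ∀ j ≤ N, ∫⁻ ω in stayIn K j, W j (ω j) ∂P = ∫⁻ ω, W 0 (ω 0) ∂P
  | 0, _ => by rw [stayIn_zero, Measure.restrict_univ]
  | j + 1, hj => by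
    rw [setLIntegral_stayIn_succ hK (hmarkov j) (hW _) (hrec j hj),
      setLIntegral_stayIn_eq_lintegral_zero hK hmarkov hW hrec j (by omega)]

theorem measure_reachAvoid_eq_of_lintegral_recursion (hK : MeasurableSet K) {T : Set X}
    (hT : MeasurableSet T) {N : ℕ} {x₀ : X}
    (hinit : P.map (fun ω => ω 0) = Measure.dirac x₀)
    (hmarkov : ∀ k : ℕ, ∀ A, MeasurableSet A → ∀ B, MeasurableSet[pastMeasurableSpace k] B →
      P (B ∩ {ω | ω (k + 1) ∈ A}) = ∫⁻ ω in B, κ k (ω k) A ∂P)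
    (hW : ∀ k, Measurable (W k)) (hWN : W N = T.indicator 1)
    (hrec : ∀ k < N, ∀ x, W k x = K.indicator (fun x => ∫⁻ y, W (k + 1) y ∂κ k x) x) :
    P {ω | ω N ∈ T ∧ ∀ k < N, ω k ∈ K} = W 0 x₀ := by
  have hreach : {ω | ω N ∈ T ∧ ∀ k < N, ω k ∈ K} = (fun ω => ω N) ⁻¹' T ∩ stayIn K N := rfl
  rw [← lintegral_comp_zero_of_map_eq_dirac hinit (hW 0),
    ← setLIntegral_stayIn_eq_lintegral_zero hK hmarkov hW hrec N le_rfl, hWN, hreach,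
    ← Measure.restrict_apply (measurable_pi_apply N hT),
    ← lintegral_indicator_one (measurable_pi_apply N hT)]
  rfl

end Path

section Real

variable {X : Type*} [MeasurableSpace X]

lemma integral_mem_Icc_zero_one {μ : Measure X} [IsProbabilityMeasure μ] {f : X → ℝ}
    (hf : ∀ x, f x ∈ Icc 0 1) : ∫ x, f x ∂μ ∈ Icc (0 : ℝ) 1 :=
  ⟨integral_nonneg fun x => (hf x).1, by
    simpa using integral_mono_of_nonneg (μ := μ) (.of_forall fun x => (hf x).1)
      (integrable_const (1 : ℝ)) (.of_forall fun x => (hf x).2)⟩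

variable {κ : ℕ → Kernel X X} [∀ k, IsMarkovKernel (κ k)] {K T : Set X} {N : ℕ} {V : ℕ → X → ℝ}

lemma mem_Icc_of_backward_recursion (hVN : ∀ x, V N x = T.indicator (fun _ => (1 : ℝ)) x)
    (hVk : ∀ k < N, ∀ x, V k x = K.indicator (fun _ => (1 : ℝ)) x * ∫ y, V (k + 1) y ∂(κ k x))
    {k : ℕ} (hk : k ≤ N) (x : X) : V k x ∈ Icc (0 : ℝ) 1 := by
  induction hk using Nat.decreasingInduction generalizing x with
  | self => by_cases hx : x ∈ T <;> simp [hVN, hx]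
  | of_succ k hk ih =>
    have := integral_mem_Icc_zero_one (μ := κ k x) ih
    by_cases hx : x ∈ K <;> simp [hVk k hk, hx, this.1, this.2]

lemma ofReal_backward_recursion {k : ℕ} (hV : Measurable (V (k + 1)))
    (hbound : ∀ x, V (k + 1) x ∈ Icc (0 : ℝ) 1)
    (hVk : ∀ x, V k x = K.indicator (fun _ => (1 : ℝ)) x * ∫ y, V (k + 1) y ∂(κ k x)) (x : X) :
    ENNReal.ofReal (V k x)
      = K.indicator (fun x => ∫⁻ y, ENNReal.ofReal (V (k + 1) y) ∂κ k x) x := by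
  have hint : Integrable (V (k + 1)) (κ k x) :=
    .of_bound hV.aestronglyMeasurable 1 (.of_forall fun y => by
      rw [Real.norm_of_nonneg (hbound y).1]; exact (hbound y).2)
  by_cases hx : x ∈ K
  · simp [hVk, hx, ofReal_integral_eq_lintegral_ofReal hint (.of_forall fun y => (hbound y).1)]
  · simp [hVk, hx]

end Real

theorem backward_recursion_eq_reach_avoid_probability_general
    {X : Type*} [MeasurableSpace X]
    (κ : ℕ → Kernel X X) [∀ k, IsMarkovKernel (κ k)]
    (K T : Set X) (hK : MeasurableSet K) (hT : MeasurableSet T)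
    (N : ℕ) (x₀ : X)
    (P : Measure (ℕ → X))
    (hinit : P.map (fun ω => ω 0) = Measure.dirac x₀)
    (hmarkov : ∀ k : ℕ, ∀ A : Set X, MeasurableSet A →
      ∀ B : Set (ℕ → X),
        MeasurableSet[⨆ i : Fin (k + 1),
          MeasurableSpace.comap (fun ω : ℕ → X => ω i) ‹MeasurableSpace X›] B →
        P (B ∩ {ω | ω (k + 1) ∈ A}) = ∫⁻ ω in B, κ k (ω k) A ∂P)
    (V : ℕ → X → ℝ) (hVmeas : ∀ k, Measurable (V k))
    (hVN : ∀ x, V N x = T.indicator (fun _ => (1 : ℝ)) x)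
    (hVk : ∀ k < N, ∀ x, V k x =
      K.indicator (fun _ => (1 : ℝ)) x * ∫ y, V (k + 1) y ∂(κ k x)) :
    (P {ω | ω N ∈ T ∧ ∀ k < N, ω k ∈ K}).toReal = V 0 x₀ := by
  have hbound : ∀ k ≤ N, ∀ x, V k x ∈ Icc (0 : ℝ) 1 :=
    fun k hk => mem_Icc_of_backward_recursion hVN hVk hk
  have hWN : (fun x => ENNReal.ofReal (V N x)) = T.indicator 1 := by
    ext x; by_cases hx : x ∈ T <;> simp [hVN, hx]
  rw [measure_reachAvoid_eq_of_lintegral_recursion hK hT hinit hmarkov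
      (fun k => (hVmeas k).ennreal_ofReal) hWN
      (fun k hk => ofReal_backward_recursion (hVmeas (k + 1)) (hbound (k + 1) hk) (hVk k hk)),
    ENNReal.toReal_ofReal (hbound 0 (Nat.zero_le N) x₀).1]

/-- The backward dynamic-programming recursion computes the terminal-hitting
reach-avoid probability. Here `P` is the law on path space `ℕ → X` of the
time-inhomogeneous Markov chain with transition kernels `κ_k` started at `x₀`
(as produced by the Ionescu–Tulcea theorem), characterized by its initial
distribution `δ_{x₀}` and the one-step Markov property with respect to the
σ-algebras generated by the coordinates `0, …, k`. -/
theorem backward_recursion_eq_reach_avoid_probability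
    {X : Type*} [MeasurableSpace X]
    (κ : ℕ → Kernel X X) [∀ k, IsMarkovKernel (κ k)]
    (K T : Set X) (hK : MeasurableSet K) (hT : MeasurableSet T)
    (N : ℕ) (hN : 1 ≤ N) (x₀ : X)
    (P : Measure (ℕ → X)) [IsProbabilityMeasure P]
    (hinit : P.map (fun ω => ω 0) = Measure.dirac x₀)
    (hmarkov : ∀ k : ℕ, ∀ A : Set X, MeasurableSet A →
      ∀ B : Set (ℕ → X),
        MeasurableSet[⨆ i : Fin (k + 1),
          MeasurableSpace.comap (fun ω : ℕ → X => ω i) ‹MeasurableSpace X›] B →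
        P (B ∩ {ω | ω (k + 1) ∈ A}) = ∫⁻ ω in B, κ k (ω k) A ∂P)
    (V : ℕ → X → ℝ) (hVmeas : ∀ k, Measurable (V k))
    (hVN : ∀ x, V N x = T.indicator (fun _ => (1 : ℝ)) x)
    (hVk : ∀ k < N, ∀ x, V k x =
      K.indicator (fun _ => (1 : ℝ)) x * ∫ y, V (k + 1) y ∂(κ k x)) :
    (P {ω | ω N ∈ T ∧ ∀ k < N, ω k ∈ K}).toReal = V 0 x₀ :=
  backward_recursion_eq_reach_avoid_probability_general κ K T hK hT N x₀ P hinit hmarkov V hVmeas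
    hVN hVk
end
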